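/- Let g be a CRT excursion and let S be an i.i.d. random sequence of signs with P(S_i = ⊕) = p ∈ (0,1). Then almost surely the signed excursion (g,S) satisfies property (A): for all i ≠ j with [a'_j,c'_j] ⊆ [a'_i,c'_i], the sets {h_l : [a'_l,c'_l] ⊆ [a'_i,c'_i], [a'_j,c'_j] ⊆ [b'_l,c'_l]} and {h_l : [a'_l,c'_l] ⊆ [a'_i,c'_i], [a'_j,c'_j] ⊆ [a'_l,b'_l]} are dense in [h_i,h_j]. -/

import Mathlib

open MeasureTheory Set

noncomputable section

/-- `x` is not a one-sided minimum of `g`. -/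
def NotOneSidedMin (g : ℝ → ℝ) (x : ℝ) : Prop :=
  x ∈ Set.Ioo (0:ℝ) 1 ∧ ∀ ε > 0, (∃ x₁ ∈ Set.Ioo (x-ε) x, g x₁ < g x) ∧
    (∃ x₂ ∈ Set.Ioo x (x+ε), g x₂ < g x)

/-- `b` is an inner local minimum of `g`. -/
def IsInnerLocalMin (g : ℝ → ℝ) (b : ℝ) : Prop :=
  b ∈ Set.Ioo (0:ℝ) 1 ∧ ∃ ε > 0, ∀ x ∈ Set.Ioo (b-ε) (b+ε), g b ≤ g x

/-- `b` is a strict (inner) local minimum of `g`. -/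
def IsStrictLocalMin (g : ℝ → ℝ) (b : ℝ) : Prop :=
  b ∈ Set.Ioo (0:ℝ) 1 ∧ ∃ ε > 0, ∀ x ∈ Set.Ioo (b-ε) (b+ε), x ≠ b → g b < g x

/-- A CRT excursion. -/
structure IsCRT (g : ℝ → ℝ) : Prop where
  cont : ContinuousOn g (Set.Icc 0 1)
  nonneg : ∀ t ∈ Set.Icc (0:ℝ) 1, 0 ≤ g t
  pos : ∀ t ∈ Set.Ioo (0:ℝ) 1, 0 < g t
  zero0 : g 0 = 0
  zero1 : g 1 = 0
  dense_min : ∀ x ∈ Set.Icc (0:ℝ) 1, x ∈ closure {b | IsInnerLocalMin g b}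
  distinct : ∀ b b', IsInnerLocalMin g b → IsInnerLocalMin g b' → g b = g b' → b = b'
  leaves_full : volume {x | NotOneSidedMin g x} = 1

/-- `β` is the unique minimum point of `g` on `[x,y]`, lies in `(x,y)`,
and is a strict local minimum: the most recent common ancestor of `x < y`. -/
def IsMrca (g : ℝ → ℝ) (β x y : ℝ) : Prop :=
  x < y ∧ β ∈ Set.Ioo x y ∧ IsStrictLocalMin g β ∧
    (∀ t ∈ Set.Icc x y, g β ≤ g t) ∧ (∀ t ∈ Set.Icc x y, g t = g β → t = β)

/-- `x` and `y` are `g`-comparable. -/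
def GComparable (g : ℝ → ℝ) (x y : ℝ) : Prop :=
  ∃ β, IsMrca g β (min x y) (max x y)

/-- `b` enumerates (injectively) the strict local minima of `g`. -/
def IsEnum (g : ℝ → ℝ) (b : ℕ → ℝ) : Prop :=
  Function.Injective b ∧ ∀ β, IsStrictLocalMin g β ↔ ∃ i, b i = β

/-- The sign-shuffled comparison relation `u ⊲ v` : if the mrca of `u,v` carries
sign `⊕` (`true`) then the smaller goes first, otherwise the bigger goes first. -/
def Tri (g : ℝ → ℝ) (b : ℕ → ℝ) (s : ℕ → Bool) (u v : ℝ) : Prop :=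
  ∃ i, (IsMrca g (b i) u v ∧ s i = true) ∨ (IsMrca g (b i) v u ∧ s i = false)

/-- The measure-preserving function `φ_{g,s}`. -/
def phi (g : ℝ → ℝ) (b : ℕ → ℝ) (s : ℕ → Bool) (t : ℝ) : ℝ :=
  (volume {u ∈ Set.Icc (0:ℝ) 1 | Tri g b s u t}).toReal

def aPt (g : ℝ → ℝ) (β : ℝ) : ℝ := sSup {t | t < β ∧ g t = g β}
def cPt (g : ℝ → ℝ) (β : ℝ) : ℝ := sInf {t | β < t ∧ g t = g β}

def aI (g : ℝ → ℝ) (b : ℕ → ℝ) (i : ℕ) : ℝ := aPt g (b i)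
def cI (g : ℝ → ℝ) (b : ℕ → ℝ) (i : ℕ) : ℝ := cPt g (b i)
def aI' (g : ℝ → ℝ) (b : ℕ → ℝ) (s : ℕ → Bool) (i : ℕ) : ℝ := phi g b s (aI g b i)
def cI' (g : ℝ → ℝ) (b : ℕ → ℝ) (s : ℕ → Bool) (i : ℕ) : ℝ :=
  aI' g b s i + (cI g b i - aI g b i)
def bI' (g : ℝ → ℝ) (b : ℕ → ℝ) (s : ℕ → Bool) (i : ℕ) : ℝ :=
  aI' g b s i + (if s i then b i - aI g b i else cI g b i - b i)

/-- The permuton `μ_{g,s} = (Id, φ_{g,s})_* Leb`. -/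
def permuton (g : ℝ → ℝ) (b : ℕ → ℝ) (s : ℕ → Bool) : Measure (ℝ × ℝ) :=
  Measure.map (fun t => (t, phi g b s t)) (volume.restrict (Set.Icc 0 1))

/-- Property (A) of a signed excursion. -/
def PropA (g : ℝ → ℝ) (b : ℕ → ℝ) (s : ℕ → Bool) : Prop :=
  ∀ i j, i ≠ j →
    Set.Icc (aI' g b s j) (cI' g b s j) ⊆ Set.Icc (aI' g b s i) (cI' g b s i) →
    (∀ y ∈ Set.Icc (g (b i)) (g (b j)),
      y ∈ closure {h | ∃ l, h = g (b l) ∧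
        Set.Icc (aI' g b s l) (cI' g b s l) ⊆ Set.Icc (aI' g b s i) (cI' g b s i) ∧
        Set.Icc (aI' g b s j) (cI' g b s j) ⊆ Set.Icc (bI' g b s l) (cI' g b s l)}) ∧
    (∀ y ∈ Set.Icc (g (b i)) (g (b j)),
      y ∈ closure {h | ∃ l, h = g (b l) ∧
        Set.Icc (aI' g b s l) (cI' g b s l) ⊆ Set.Icc (aI' g b s i) (cI' g b s i) ∧
        Set.Icc (aI' g b s j) (cI' g b s j) ⊆ Set.Icc (aI' g b s l) (bI' g b s l)})

/-- The shuffled excursion `f_{g,s}`. -/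
def fShuffle (g : ℝ → ℝ) (b : ℕ → ℝ) (s : ℕ → Bool) (t : ℝ) : ℝ :=
  ⨆ i, Set.indicator (Set.Icc (aI' g b s i) (cI' g b s i)) (fun _ => g (b i)) t

/-- Topological support of a measure. -/
def mSupport {α : Type*} [TopologicalSpace α] [MeasurableSpace α] (μ : Measure α) : Set α :=
  {x | ∀ U : Set α, IsOpen U → x ∈ U → μ U ≠ 0}

/-!
The blocks `[aPt g β, cPt g β]` of the strict local minima of `g` are nested or disjoint, and
`φ_{g,s}` moves every block rigidly, putting the images of its halves `(aPt g β, β)` and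
`(β, cPt g β)` in the order given by the sign of `β`. Hence shuffled blocks are nested only if the
original ones are, and the shuffled block of a descendant `j` of `l` lies in `[b'_l, c'_l]` or in
`[a'_l, b'_l]` according to whether the sign of `l` agrees with the side of `b l` on which `j`
lies.

Between the heights of an ancestor `i` and a descendant `j`, every window contains the height of
an intermediate ancestor: the minimum of `g` between `b j` and a local minimum found just after
the last time `g` is below the window. So each window holds infinitely many such ancestors, whose
signs are independent with bias in `(0, 1)`; almost surely, for all rational windows at once,
both sign patterns occur among them, which is property (A).
-/

section LocalMin

variable {g : ℝ → ℝ} {β γ t u v : ℝ}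

lemma IsStrictLocalMin.isInnerLocalMin (h : IsStrictLocalMin g β) : IsInnerLocalMin g β := by
  obtain ⟨hβ, ε, hε, hlt⟩ := h
  refine ⟨hβ, ε, hε, fun x hx => ?_⟩
  rcases eq_or_ne x β with rfl | hne
  exacts [le_rfl, (hlt x hx hne).le]

lemma isInnerLocalMin_of_forall_Ioo (ht : t ∈ Ioo u v) (hu : 0 ≤ u) (hv : v ≤ 1)
    (hle : ∀ x ∈ Ioo u v, g t ≤ g x) : IsInnerLocalMin g t := by
  refine ⟨⟨hu.trans_lt ht.1, ht.2.trans_le hv⟩, min (t - u) (v - t),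
    lt_min (sub_pos.2 ht.1) (sub_pos.2 ht.2), fun x hx => hle x ⟨?_, ?_⟩⟩
  · linarith [min_le_left (t - u) (v - t), hx.1]
  · linarith [min_le_right (t - u) (v - t), hx.2]

lemma isInnerLocalMin_of_isMinOn (ht : t ∈ Ioo u v) (hu : 0 ≤ u) (hv : v ≤ 1)
    (hmin : IsMinOn g (Icc u v) t) : IsInnerLocalMin g t :=
  isInnerLocalMin_of_forall_Ioo ht hu hv fun _ hx => hmin (Ioo_subset_Icc_self hx)

namespace IsCRT

lemma eq_of_isStrictLocalMin (hg : IsCRT g) (hβ : IsStrictLocalMin g β)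
    (hγ : IsStrictLocalMin g γ) (h : g β = g γ) : β = γ :=
  hg.distinct β γ hβ.isInnerLocalMin hγ.isInnerLocalMin h

/-- A nearby point at the same height would be an inner local minimum as well. -/
lemma isStrictLocalMin_of_isInnerLocalMin (hg : IsCRT g) (h : IsInnerLocalMin g β) :
    IsStrictLocalMin g β := by
  obtain ⟨⟨h0, h1⟩, ε, hε, hle⟩ := h
  set δ := min ε (min β (1 - β))
  have hδε : δ ≤ ε := min_le_left _ _
  have hδ0 : δ ≤ β := (min_le_right _ _).trans (min_le_left _ _)
  have hδ1 : δ ≤ 1 - β := (min_le_right _ _).trans (min_le_right _ _)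
  have hδ : 0 < δ := lt_min hε (lt_min h0 (by linarith))
  have hsub : Ioo (β - δ) (β + δ) ⊆ Ioo (β - ε) (β + ε) :=
    Ioo_subset_Ioo (by linarith) (by linarith)
  refine ⟨⟨h0, h1⟩, δ, hδ, fun x hx hxβ =>
    lt_of_le_of_ne (hle x (hsub hx)) fun hgx => hxβ ?_⟩
  refine hg.distinct x β (isInnerLocalMin_of_forall_Ioo hx (by linarith) (by linarith)
    fun y hy => ?_) ⟨⟨h0, h1⟩, ε, hε, hle⟩ hgx.symm
  rw [← hgx]
  exact hle y (hsub hy)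

lemma exists_isInnerLocalMin_mem_Ioo (hg : IsCRT g) (huv : u < v) (hu : 0 ≤ u) (hv : v ≤ 1) :
    ∃ β ∈ Ioo u v, IsInnerLocalMin g β := by
  obtain ⟨β, hβ, hd⟩ := Metric.mem_closure_iff.mp
    (hg.dense_min ((u + v) / 2) ⟨by linarith, by linarith⟩) ((v - u) / 2) (by linarith)
  rw [Real.dist_eq, abs_lt] at hd
  exact ⟨β, ⟨by linarith, by linarith⟩, hβ⟩

end IsCRT

end LocalMin

section LevelSet

variable {α : Type*} [ConditionallyCompleteLinearOrder α] [TopologicalSpace α] [OrderTopology α]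
  [DenselyOrdered α] {f : α → ℝ} {x₀ p β : α}

/-- Stated for any order so that, applied in `ℝᵒᵈ`, it also yields the right end `cPt` of a
block. -/
lemma exists_isGreatest_levelSet_Iio (hx₀p : x₀ < p) (hpβ : p < β)
    (hf : ContinuousOn f (Icc x₀ β)) (hx₀ : f x₀ < f β) (hnear : ∀ t ∈ Ico p β, f β < f t) :
    ∃ a, IsGreatest {t | t < β ∧ f t = f β} a ∧ x₀ < a ∧ ∀ t ∈ Ioo a β, f β < f t := by
  have hfp : f β < f p := hnear p ⟨le_rfl, hpβ⟩
  have hfp' : ContinuousOn f (Icc x₀ p) := hf.mono (Icc_subset_Icc_right hpβ.le)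
  obtain ⟨t₀, ht₀, hft₀⟩ := intermediate_value_Icc hx₀p.le hfp' ⟨hx₀.le, hfp.le⟩
  set K := {t ∈ Icc x₀ p | f t = f β}
  have hK : IsClosed K := hfp'.preimage_isClosed_of_isClosed isClosed_Icc isClosed_singleton
  have hKbdd : BddAbove K := ⟨p, fun t ht => ht.1.2⟩
  have haK : sSup K ∈ K := hK.csSup_mem ⟨t₀, ht₀, hft₀⟩ hKbdd
  have ht₀a : t₀ ≤ sSup K := le_csSup hKbdd ⟨ht₀, hft₀⟩
  have hlast : ∀ t, t < β → f t = f β → t ≤ sSup K := by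
    intro t htβ hft
    rcases le_or_gt t x₀ with htx | htx
    · exact htx.trans (ht₀.1.trans ht₀a)
    · refine le_csSup hKbdd ⟨⟨htx.le, not_lt.mp fun hpt => ?_⟩, hft⟩
      exact (hnear t ⟨hpt.le, htβ⟩).ne' hft
  refine ⟨sSup K, ⟨⟨haK.1.2.trans_lt hpβ, haK.2⟩, fun t ht => hlast t ht.1 ht.2⟩, ?_, ?_⟩
  · refine lt_of_lt_of_le (lt_of_le_of_ne ht₀.1 ?_) ht₀a
    rintro rfl
    exact hx₀.ne hft₀
  · rintro t ⟨hat, htβ⟩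
    by_contra! hft
    rcases lt_or_ge t p with htp | htp
    · obtain ⟨t', ht', hft'⟩ := intermediate_value_Icc htp.le
        (hf.mono (Icc_subset_Icc ((ht₀.1.trans ht₀a).trans hat.le) hpβ.le)) ⟨hft, hfp.le⟩
      exact (hat.trans_le ht'.1).not_ge (hlast t' (ht'.2.trans_lt hpβ) hft')
    · exact (hnear t ⟨htp, htβ⟩).not_ge hft

end LevelSet

def block (g : ℝ → ℝ) (β : ℝ) : Set ℝ := Icc (aPt g β) (cPt g β)

structure StrictMinBlock (g : ℝ → ℝ) (β : ℝ) : Prop where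
  isStrictLocalMin : IsStrictLocalMin g β
  aPt_pos : 0 < aPt g β
  aPt_lt : aPt g β < β
  lt_cPt : β < cPt g β
  cPt_lt_one : cPt g β < 1
  apply_aPt : g (aPt g β) = g β
  apply_cPt : g (cPt g β) = g β
  lt_apply : ∀ t ∈ Ioo (aPt g β) (cPt g β), t ≠ β → g β < g t

section Block

variable {g : ℝ → ℝ} {β γ t x : ℝ}

open OrderDual in
lemma IsStrictLocalMin.strictMinBlock (hg : IsCRT g) (h : IsStrictLocalMin g β) :
    StrictMinBlock g β := by
  obtain ⟨⟨h0, h1⟩, ε, hε, hlt⟩ := h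
  have hpos : 0 < g β := hg.pos β ⟨h0, h1⟩
  obtain ⟨a, ⟨⟨haβ, hga⟩, hamax⟩, ha0, hleft⟩ :=
    exists_isGreatest_levelSet_Iio (x₀ := 0) (p := max (β - ε / 2) (β / 2))
      (lt_max_of_lt_right (by linarith)) (max_lt (by linarith) (by linarith))
      (hg.cont.mono (Icc_subset_Icc_right h1.le)) (by rw [hg.zero0]; exact hpos)
      fun t ht => hlt t
        ⟨by linarith [le_max_left (β - ε / 2) (β / 2), ht.1], by linarith [ht.2]⟩ ht.2.ne
  have haPt : aPt g β = a := IsGreatest.csSup_eq ⟨⟨haβ, hga⟩, hamax⟩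
  obtain ⟨c, ⟨⟨hcβ, hgc⟩, hcmin⟩, hc1, hright⟩ :=
    exists_isGreatest_levelSet_Iio (f := g ∘ ofDual) (x₀ := toDual 1) (β := toDual β)
      (p := toDual (min (β + ε / 2) ((1 + β) / 2)))
      (toDual_lt_toDual.2 (min_lt_of_right_lt (by linarith)))
      (toDual_lt_toDual.2 (lt_min (by linarith) (by linarith)))
      (by
        rw [Icc_toDual]
        exact (hg.cont.mono (Icc_subset_Icc_left h0.le)).comp continuous_ofDual.continuousOn
          (mapsTo_preimage _ _))
      (by simp only [Function.comp_apply, ofDual_toDual, hg.zero1]; exact hpos)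
      fun t ⟨ht₁, ht₂⟩ => by
        have ht₁' : ofDual t ≤ min (β + ε / 2) ((1 + β) / 2) := ht₁
        have ht₂' : β < ofDual t := ht₂
        exact hlt (ofDual t) ⟨by linarith,
          by linarith [min_le_left (β + ε / 2) ((1 + β) / 2)]⟩ ht₂'.ne'
  have hcPt : cPt g β = ofDual c :=
    congrArg ofDual (IsGreatest.csSup_eq ⟨⟨hcβ, hgc⟩, hcmin⟩)
  refine ⟨⟨⟨h0, h1⟩, ε, hε, hlt⟩, haPt ▸ ha0, haPt ▸ haβ, hcPt ▸ hcβ, hcPt ▸ hc1,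
    haPt ▸ hga, hcPt ▸ hgc, fun t ht htβ => ?_⟩
  rw [haPt, hcPt] at ht
  rcases htβ.lt_or_gt with htβ | htβ
  · exact hleft t ⟨ht.1, htβ⟩
  · exact hright (toDual t) ⟨ht.2, htβ⟩

namespace StrictMinBlock

lemma mem_block (h : StrictMinBlock g β) : β ∈ block g β := ⟨h.aPt_lt.le, h.lt_cPt.le⟩

lemma aPt_mem_block (h : StrictMinBlock g β) : aPt g β ∈ block g β :=
  ⟨le_rfl, (h.aPt_lt.trans h.lt_cPt).le⟩

lemma cPt_mem_block (h : StrictMinBlock g β) : cPt g β ∈ block g β :=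
  ⟨(h.aPt_lt.trans h.lt_cPt).le, le_rfl⟩

lemma block_subset_Icc (h : StrictMinBlock g β) : block g β ⊆ Icc 0 1 :=
  Icc_subset_Icc h.aPt_pos.le h.cPt_lt_one.le

lemma apply_le (h : StrictMinBlock g β) (ht : t ∈ block g β) : g β ≤ g t := by
  rcases ht.1.eq_or_lt with rfl | hat
  · exact h.apply_aPt.ge
  rcases ht.2.eq_or_lt with rfl | htc
  · exact h.apply_cPt.ge
  rcases eq_or_ne t β with rfl | htβ
  exacts [le_rfl, (h.lt_apply t ⟨hat, htc⟩ htβ).le]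

lemma not_mem_block (h : StrictMinBlock g β) (ht : g t < g β) : t ∉ block g β :=
  fun hm => (h.apply_le hm).not_gt ht

lemma aPt_lt_of_forall (h : StrictMinBlock g β)
    (hgt : ∀ t ∈ Ico x β, g β < g t) : aPt g β < x :=
  lt_of_not_ge fun hxa => (hgt _ ⟨hxa, h.aPt_lt⟩).ne' h.apply_aPt

lemma lt_cPt_of_forall (h : StrictMinBlock g β)
    (hgt : ∀ t ∈ Ioc β x, g β < g t) : x < cPt g β :=
  lt_of_not_ge fun hxc => (hgt _ ⟨h.lt_cPt, hxc⟩).ne' h.apply_cPt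

lemma block_subset_of_mem (hβ : StrictMinBlock g β) (hγ : StrictMinBlock g γ)
    (hlt : g β < g γ) (hmem : γ ∈ Ioo (aPt g β) (cPt g β)) : block g γ ⊆ block g β := by
  have ha : aPt g β ∉ block g γ := hγ.not_mem_block (hβ.apply_aPt ▸ hlt)
  have hc : cPt g β ∉ block g γ := hγ.not_mem_block (hβ.apply_cPt ▸ hlt)
  refine Icc_subset_Icc (le_of_not_ge fun h => ha ⟨h, hmem.1.le.trans hγ.lt_cPt.le⟩)
    (le_of_not_ge fun h => hc ⟨hγ.aPt_lt.le.trans hmem.2.le, h⟩)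

lemma aPt_lt_aPt_and_cPt_lt_cPt (hβ : StrictMinBlock g β) (hγ : StrictMinBlock g γ)
    (hlt : g β < g γ) (hsub : block g γ ⊆ block g β) :
    aPt g β < aPt g γ ∧ cPt g γ < cPt g β :=
  ⟨(hsub hγ.aPt_mem_block).1.lt_of_ne fun h =>
      hγ.not_mem_block (hβ.apply_aPt ▸ hlt) (h ▸ hγ.aPt_mem_block),
    (hsub hγ.cPt_mem_block).2.lt_of_ne fun h =>
      hγ.not_mem_block (hβ.apply_cPt ▸ hlt) (h ▸ hγ.cPt_mem_block)⟩

end StrictMinBlock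

end Block

section Laminar

variable {g : ℝ → ℝ} {b : ℕ → ℝ} {l m : ℕ}

namespace IsEnum

lemma strictMinBlock (hb : IsEnum g b) (hg : IsCRT g) (l : ℕ) : StrictMinBlock g (b l) :=
  ((hb.2 (b l)).2 ⟨l, rfl⟩).strictMinBlock hg

lemma apply_ne (hb : IsEnum g b) (hg : IsCRT g) (hlm : l ≠ m) : g (b l) ≠ g (b m) :=
  fun h => hlm (hb.1 (hg.eq_of_isStrictLocalMin (hb.strictMinBlock hg l).isStrictLocalMin
    (hb.strictMinBlock hg m).isStrictLocalMin h))

lemma apply_lt_of_block_subset (hb : IsEnum g b) (hg : IsCRT g) (hlm : l ≠ m)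
    (hsub : block g (b m) ⊆ block g (b l)) : g (b l) < g (b m) := by
  have hl := hb.strictMinBlock hg l
  have hne := hb.apply_ne hg hlm
  have hm : b m ∈ block g (b l) := hsub (hb.strictMinBlock hg m).mem_block
  refine hl.lt_apply _ ⟨lt_of_le_of_ne hm.1 ?_, lt_of_le_of_ne hm.2 ?_⟩
    fun h => hlm (hb.1 h).symm
  · intro h; exact hne (by rw [← hl.apply_aPt, h])
  · intro h; exact hne (by rw [← hl.apply_cPt, ← h])

lemma block_trichotomy (hb : IsEnum g b) (hg : IsCRT g) (hlm : l ≠ m) :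
    block g (b m) ⊆ block g (b l) ∨ block g (b l) ⊆ block g (b m) ∨
      cPt g (b l) < aPt g (b m) ∨ cPt g (b m) < aPt g (b l) := by
  wlog hlt : g (b l) < g (b m) generalizing l m
  · have := this hlm.symm ((not_lt.1 hlt).lt_of_ne (hb.apply_ne hg hlm).symm)
    tauto
  have hl := hb.strictMinBlock hg l
  have hm := hb.strictMinBlock hg m
  have ha : aPt g (b l) ∉ block g (b m) := hm.not_mem_block (hl.apply_aPt ▸ hlt)
  have hc : cPt g (b l) ∉ block g (b m) := hm.not_mem_block (hl.apply_cPt ▸ hlt)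
  rcases lt_or_ge (b m) (aPt g (b l)) with hma | hma
  · exact Or.inr <| Or.inr <| Or.inr <|
      lt_of_not_ge fun h => ha ⟨hm.aPt_lt.le.trans hma.le, h⟩
  rcases lt_or_ge (cPt g (b l)) (b m) with hcm | hcm
  · exact Or.inr <| Or.inr <| Or.inl <|
      lt_of_not_ge fun h => hc ⟨h, hcm.le.trans hm.lt_cPt.le⟩
  refine Or.inl (hl.block_subset_of_mem hm hlt ⟨hma.lt_of_ne ?_, hcm.lt_of_ne' ?_⟩)
  · intro h; exact ha (h ▸ hm.mem_block)
  · intro h; exact hc (h ▸ hm.mem_block)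

/-- The common ancestor is the minimum of `g` on the gap between the two blocks. -/
lemma exists_common_ancestor (hb : IsEnum g b) (hg : IsCRT g)
    (hgap : cPt g (b l) < aPt g (b m)) :
    ∃ k, b k ∈ Ioo (cPt g (b l)) (aPt g (b m)) ∧
      block g (b l) ⊆ block g (b k) ∧ block g (b m) ⊆ block g (b k) := by
  have hl := hb.strictMinBlock hg l
  have hm := hb.strictMinBlock hg m
  set c := cPt g (b l)
  set a := aPt g (b m)
  have hc0 : 0 ≤ c := (hl.aPt_pos.trans (hl.aPt_lt.trans hl.lt_cPt)).le
  have ha1 : a ≤ 1 := (hm.aPt_lt.trans (hm.lt_cPt.trans hm.cPt_lt_one)).le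
  obtain ⟨t₀, ht₀, hmin⟩ := isCompact_Icc.exists_isMinOn (nonempty_Icc.2 hgap.le)
    (hg.cont.mono (Icc_subset_Icc hc0 ha1))
  -- an endpoint of the gap attaining the minimum would be a second local minimum at its height
  have hlt_c : g t₀ < g c := by
    by_contra! h
    refine hl.lt_cPt.ne' (hg.distinct c (b l) (isInnerLocalMin_of_forall_Ioo
      ⟨hl.lt_cPt, hgap⟩ (hl.aPt_pos.trans hl.aPt_lt).le ha1 fun x hx => ?_)
      hl.isStrictLocalMin.isInnerLocalMin hl.apply_cPt)
    rcases le_or_gt x c with hxc | hxc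
    · exact hl.apply_cPt ▸ hl.apply_le ⟨(hl.aPt_lt.trans hx.1).le, hxc⟩
    · exact h.trans (hmin ⟨hxc.le, hx.2.le⟩)
  have hlt_a : g t₀ < g a := by
    by_contra! h
    refine hm.aPt_lt.ne (hg.distinct a (b m) (isInnerLocalMin_of_forall_Ioo
      ⟨hgap, hm.aPt_lt⟩ hc0 (hm.lt_cPt.trans hm.cPt_lt_one).le fun x hx => ?_)
      hm.isStrictLocalMin.isInnerLocalMin hm.apply_aPt)
    rcases le_or_gt a x with hax | hax
    · exact hm.apply_aPt ▸ hm.apply_le ⟨hax, (hx.2.trans hm.lt_cPt).le⟩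
    · exact h.trans (hmin ⟨hx.1.le, hax.le⟩)
  have ht₀' : t₀ ∈ Ioo c a :=
    ⟨ht₀.1.lt_of_ne fun h => (h ▸ hlt_c).false, ht₀.2.lt_of_ne fun h => (h ▸ hlt_a).false⟩
  have hinner := isInnerLocalMin_of_isMinOn ht₀' hc0 ha1 hmin
  obtain ⟨k, rfl⟩ := (hb.2 t₀).1 (hg.isStrictLocalMin_of_isInnerLocalMin hinner)
  have hk := hb.strictMinBlock hg k
  have hgap_lt : ∀ t ∈ Ioo c a, t ≠ b k → g (b k) < g t := fun t ht htk =>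
    (hmin (Ioo_subset_Icc_self ht)).lt_of_ne fun h => htk <| hg.distinct t (b k)
      (isInnerLocalMin_of_isMinOn ht hc0 ha1 fun x hx => h ▸ hmin hx) hinner h.symm
  refine ⟨k, ht₀', hk.block_subset_of_mem hl (hl.apply_cPt ▸ hlt_c) ⟨?_, ?_⟩,
    hk.block_subset_of_mem hm (hm.apply_aPt ▸ hlt_a) ⟨?_, ?_⟩⟩
  · refine hk.aPt_lt_of_forall fun t ht => ?_
    rcases le_or_gt t c with htc | htc
    · exact (hl.apply_cPt ▸ hlt_c).trans_le (hl.apply_le ⟨(hl.aPt_lt.trans_le ht.1).le, htc⟩)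
    · exact hgap_lt t ⟨htc, ht.2.trans ht₀'.2⟩ ht.2.ne
  · exact (hl.lt_cPt.trans ht₀'.1).trans hk.lt_cPt
  · exact hk.aPt_lt.trans (ht₀'.2.trans hm.aPt_lt)
  · refine hk.lt_cPt_of_forall fun t ht => ?_
    rcases le_or_gt a t with hat | hat
    · exact (hm.apply_aPt ▸ hlt_a).trans_le (hm.apply_le ⟨hat, ht.2.trans hm.lt_cPt.le⟩)
    · exact hgap_lt t ⟨ht₀'.1.trans ht.1, hat⟩ ht.1.ne'

end IsEnum

end Laminar

section Tri

variable {g : ℝ → ℝ} {b : ℕ → ℝ} {s : ℕ → Bool} {β γ γ' u v w x : ℝ} {l : ℕ}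

lemma tri_iff_of_lt (h : u < v) : Tri g b s u v ↔ ∃ i, IsMrca g (b i) u v ∧ s i = true :=
  exists_congr fun _ => or_iff_left fun h' => h'.1.1.not_gt h

lemma tri_iff_of_gt (h : v < u) : Tri g b s u v ↔ ∃ i, IsMrca g (b i) v u ∧ s i = false :=
  exists_congr fun _ => or_iff_right fun h' => h'.1.1.not_gt h

lemma IsMrca.eq (h : IsMrca g γ u v) (h' : IsMrca g γ' u v) : γ = γ' :=
  h'.2.2.2.2 γ (Ioo_subset_Icc_self h.2.1)
    (le_antisymm (h.2.2.2.1 γ' (Ioo_subset_Icc_self h'.2.1))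
      (h'.2.2.2.1 γ (Ioo_subset_Icc_self h.2.1)))

lemma isMrca_iff_of_right (hux : u < x) (hxw : x ≤ w) (hge : ∀ t ∈ Icc x w, g x ≤ g t)
    (hx : ¬ IsStrictLocalMin g x) : IsMrca g γ u x ↔ IsMrca g γ u w := by
  constructor
  · rintro ⟨-, hγ, hs, hmin, huniq⟩
    have hγx : g γ < g x := (hmin x ⟨hux.le, le_rfl⟩).lt_of_ne fun h =>
      hγ.2.ne (huniq x ⟨hux.le, le_rfl⟩ h.symm).symm
    refine ⟨hux.trans_le hxw, ⟨hγ.1, hγ.2.trans_le hxw⟩, hs, fun t ht => ?_, fun t ht heq => ?_⟩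
    · rcases le_or_gt t x with htx | htx
      exacts [hmin t ⟨ht.1, htx⟩, hγx.le.trans (hge t ⟨htx.le, ht.2⟩)]
    · rcases le_or_gt t x with htx | htx
      exacts [huniq t ⟨ht.1, htx⟩ heq, absurd heq (hγx.trans_le (hge t ⟨htx.le, ht.2⟩)).ne']
  · rintro ⟨-, hγ, hs, hmin, huniq⟩
    have hγx : g γ < g x := (hmin x ⟨hux.le, hxw⟩).lt_of_ne fun h =>
      hx (huniq x ⟨hux.le, hxw⟩ h.symm ▸ hs)
    have hγx' : γ < x := lt_of_not_ge fun h => (hge γ ⟨h, hγ.2.le⟩).not_gt hγx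
    exact ⟨hux, ⟨hγ.1, hγx'⟩, hs, fun t ht => hmin t ⟨ht.1, ht.2.trans hxw⟩,
      fun t ht => huniq t ⟨ht.1, ht.2.trans hxw⟩⟩

lemma isMrca_iff_of_left (hxu : x < u) (hwx : w ≤ x) (hge : ∀ t ∈ Icc w x, g x ≤ g t)
    (hx : ¬ IsStrictLocalMin g x) : IsMrca g γ x u ↔ IsMrca g γ w u := by
  constructor
  · rintro ⟨-, hγ, hs, hmin, huniq⟩
    have hγx : g γ < g x := (hmin x ⟨le_rfl, hxu.le⟩).lt_of_ne fun h =>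
      hγ.1.ne (huniq x ⟨le_rfl, hxu.le⟩ h.symm)
    refine ⟨hwx.trans_lt hxu, ⟨hwx.trans_lt hγ.1, hγ.2⟩, hs, fun t ht => ?_, fun t ht heq => ?_⟩
    · rcases le_or_gt x t with hxt | hxt
      exacts [hmin t ⟨hxt, ht.2⟩, hγx.le.trans (hge t ⟨ht.1, hxt.le⟩)]
    · rcases le_or_gt x t with hxt | hxt
      exacts [huniq t ⟨hxt, ht.2⟩ heq, absurd heq (hγx.trans_le (hge t ⟨ht.1, hxt.le⟩)).ne']
  · rintro ⟨-, hγ, hs, hmin, huniq⟩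
    have hγx : g γ < g x := (hmin x ⟨hwx, hxu.le⟩).lt_of_ne fun h =>
      hx (huniq x ⟨hwx, hxu.le⟩ h.symm ▸ hs)
    have hxγ : x < γ := lt_of_not_ge fun h => (hge γ ⟨hγ.1.le, h⟩).not_gt hγx
    exact ⟨hxu, ⟨hxγ, hγ.2⟩, hs, fun t ht => hmin t ⟨hwx.trans ht.1, ht.2⟩,
      fun t ht => huniq t ⟨hwx.trans ht.1, ht.2⟩⟩

namespace StrictMinBlock

lemma isMrca (h : StrictMinBlock g β) (hu : u ∈ Ioo (aPt g β) β) (hv : v ∈ Ioo β (cPt g β)) :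
    IsMrca g β u v :=
  ⟨hu.2.trans hv.1, ⟨hu.2, hv.1⟩, h.isStrictLocalMin,
    fun _ ht => h.apply_le ⟨hu.1.le.trans ht.1, ht.2.trans hv.2.le⟩,
    fun t ht heq => by_contra fun hne =>
      (h.lt_apply t ⟨hu.1.trans_le ht.1, ht.2.trans_lt hv.2⟩ hne).ne' heq⟩

lemma not_isMrca_aPt (h : StrictMinBlock g β) (hu : u ≤ cPt g β) :
    ¬ IsMrca g γ (aPt g β) u := by
  rintro ⟨hau, hγ, -, hmin, huniq⟩
  have hle : g γ ≤ g β := h.apply_aPt ▸ hmin _ ⟨le_rfl, hau.le⟩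
  rcases eq_or_ne γ β with rfl | hne
  · exact hγ.1.ne (huniq _ ⟨le_rfl, hau.le⟩ h.apply_aPt)
  · exact hle.not_gt (h.lt_apply γ ⟨hγ.1, hγ.2.trans_le hu⟩ hne)

lemma not_tri_aPt (h : StrictMinBlock g β) (hu : u ∈ Ioo (aPt g β) (cPt g β)) :
    ¬ Tri g b s u (aPt g β) := by
  rw [tri_iff_of_gt hu.1]
  rintro ⟨i, hi, -⟩
  exact h.not_isMrca_aPt hu.2.le hi

lemma tri_iff_tri_aPt (h : StrictMinBlock g β) (hg : IsCRT g) (hw : w ∈ block g β)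
    (hu : u ∉ block g β) : Tri g b s u w ↔ Tri g b s u (aPt g β) := by
  have hna : ¬ IsStrictLocalMin g (aPt g β) := fun h' =>
    h.aPt_lt.ne (hg.eq_of_isStrictLocalMin h' h.isStrictLocalMin h.apply_aPt)
  have hnc : ¬ IsStrictLocalMin g (cPt g β) := fun h' =>
    h.lt_cPt.ne' (hg.eq_of_isStrictLocalMin h' h.isStrictLocalMin h.apply_cPt)
  have hac : aPt g β ≤ cPt g β := (h.aPt_lt.trans h.lt_cPt).le
  rcases (not_and_or.1 hu).imp not_le.1 not_le.1 with hua | hcu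
  · rw [tri_iff_of_lt (hua.trans_le hw.1), tri_iff_of_lt hua]
    exact exists_congr fun _ => and_congr_left' (isMrca_iff_of_right hua hw.1
      (fun t ht => h.apply_aPt ▸ h.apply_le ⟨ht.1, ht.2.trans hw.2⟩) hna).symm
  · rw [tri_iff_of_gt (hw.2.trans_lt hcu), tri_iff_of_gt (hac.trans_lt hcu)]
    refine exists_congr fun _ => and_congr_left' ?_
    rw [← isMrca_iff_of_left hcu hw.2
        (fun t ht => h.apply_cPt ▸ h.apply_le ⟨hw.1.trans ht.1, ht.2⟩) hnc,
      ← isMrca_iff_of_left hcu hac (fun t ht => h.apply_cPt ▸ h.apply_le ht) hnc]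

end StrictMinBlock

lemma IsEnum.tri_iff_of_mem_block (hb : IsEnum g b) (hg : IsCRT g)
    (hu : u ∈ Ioo (aPt g (b l)) (b l)) (hv : v ∈ Ioo (b l) (cPt g (b l))) :
    (Tri g b s u v ↔ s l = true) ∧ (Tri g b s v u ↔ s l = false) := by
  have hmrca := (hb.strictMinBlock hg l).isMrca hu hv
  rw [tri_iff_of_lt (hu.2.trans hv.1), tri_iff_of_gt (hu.2.trans hv.1)]
  exact ⟨⟨fun ⟨i, hi, hs⟩ => hb.1 (hi.eq hmrca) ▸ hs, fun hs => ⟨l, hmrca, hs⟩⟩,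
    ⟨fun ⟨i, hi, hs⟩ => hb.1 (hi.eq hmrca) ▸ hs, fun hs => ⟨l, hmrca, hs⟩⟩⟩

end Tri

lemma measureReal_add_le_of_disjoint {α : Type*} [MeasurableSpace α] {μ : Measure α}
    {A K I : Set α} (hA : A ⊆ I) (hK : K ⊆ I) (hAK : Disjoint A K) (hKm : MeasurableSet K)
    (hI : μ I ≠ ⊤) : μ.real A + μ.real K ≤ μ.real I := by
  rw [← measureReal_union hAK hKm (measure_ne_top_of_subset hA hI)
    (measure_ne_top_of_subset hK hI)]
  exact measureReal_mono (union_subset hA hK) hI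

section Shuffle

variable {g : ℝ → ℝ} {b : ℕ → ℝ} {s : ℕ → Bool} {β γ w : ℝ}

def triSet (g : ℝ → ℝ) (b : ℕ → ℝ) (s : ℕ → Bool) (w : ℝ) : Set ℝ :=
  {u ∈ Icc (0 : ℝ) 1 | Tri g b s u w}

lemma volume_triSet_ne_top : volume (triSet g b s w) ≠ ⊤ :=
  measure_ne_top_of_subset (sep_subset _ _) measure_Icc_lt_top.ne

lemma StrictMinBlock.phi_eq_add (h : StrictMinBlock g β) (hg : IsCRT g) (hw : w ∈ block g β) :
    phi g b s w =
      phi g b s (aPt g β) + volume.real (triSet g b s w ∩ Ioo (aPt g β) (cPt g β)) := by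
  have hout : triSet g b s w \ block g β = triSet g b s (aPt g β) \ block g β := by
    ext u
    simp only [triSet, mem_sdiff, mem_sep_iff]
    exact and_congr_left fun hu => and_congr_right fun _ => h.tri_iff_tri_aPt hg hw hu
  have hin : triSet g b s (aPt g β) \ Ioo (aPt g β) (cPt g β) = triSet g b s (aPt g β) :=
    sdiff_eq_left.2 (disjoint_left.2 fun _ hu hI => h.not_tri_aPt hI hu.2)
  have hae : (triSet g b s w \ Ioo (aPt g β) (cPt g β) : Set ℝ) =ᵐ[volume]
      (triSet g b s w \ block g β : Set ℝ) :=
    Filter.EventuallyEq.rfl.diff Ioo_ae_eq_Icc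
  have hae' : (triSet g b s (aPt g β) \ Ioo (aPt g β) (cPt g β) : Set ℝ) =ᵐ[volume]
      (triSet g b s (aPt g β) \ block g β : Set ℝ) :=
    Filter.EventuallyEq.rfl.diff Ioo_ae_eq_Icc
  change volume.real (triSet g b s w) = volume.real (triSet g b s (aPt g β)) + _
  rw [← measureReal_inter_add_sdiff (measurableSet_Ioo (a := aPt g β) (b := cPt g β))
      volume_triSet_ne_top, add_comm,
    measureReal_congr hae, hout, ← measureReal_congr hae', hin]

/-- `Q` stands for the half of the block of `β` away from the block of `γ`: depending on the
sign of `β`, either all of it or none of it precedes `aPt g γ` for `Tri`. -/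
lemma StrictMinBlock.phi_aPt_bounds (hβ : StrictMinBlock g β) (hγ : StrictMinBlock g γ)
    (hg : IsCRT g) (hsub : block g γ ⊆ block g β) {Q : Set ℝ}
    (hQ : Q ⊆ Ioo (aPt g β) (cPt g β)) (hQm : MeasurableSet Q)
    (hQγ : Disjoint Q (Ioo (aPt g γ) (cPt g γ))) :
    (Q ⊆ triSet g b s (aPt g γ) →
      phi g b s (aPt g β) + volume.real Q ≤ phi g b s (aPt g γ) ∧
      phi g b s (aPt g γ) + (cPt g γ - aPt g γ) ≤ phi g b s (aPt g β) + (cPt g β - aPt g β)) ∧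
    (Disjoint Q (triSet g b s (aPt g γ)) →
      phi g b s (aPt g β) ≤ phi g b s (aPt g γ) ∧
      phi g b s (aPt g γ) + (cPt g γ - aPt g γ) + volume.real Q ≤
        phi g b s (aPt g β) + (cPt g β - aPt g β)) := by
  set A := triSet g b s (aPt g γ) ∩ Ioo (aPt g β) (cPt g β)
  have hγI : Ioo (aPt g γ) (cPt g γ) ⊆ Ioo (aPt g β) (cPt g β) :=
    Ioo_subset_Ioo (hsub hγ.aPt_mem_block).1 (hsub hγ.cPt_mem_block).2
  have hAγ : Disjoint A (Ioo (aPt g γ) (cPt g γ)) :=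
    disjoint_left.2 fun _ hu hI => hγ.not_tri_aPt hI hu.1.2
  have hphi : phi g b s (aPt g γ) = phi g b s (aPt g β) + volume.real A :=
    hβ.phi_eq_add hg (hsub hγ.aPt_mem_block)
  have hlen : ∀ {x y : ℝ}, x < y → volume.real (Ioo x y) = y - x :=
    fun h => Real.volume_real_Ioo_of_le h.le
  have hIfin : volume (Ioo (aPt g β) (cPt g β)) ≠ ⊤ := measure_Ioo_lt_top.ne
  have hA0 : 0 ≤ volume.real A := measureReal_nonneg
  refine ⟨fun hQA => ?_, fun hQA => ?_⟩
  · have h₁ := measureReal_mono (μ := volume) (subset_inter hQA hQ)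
      (measure_ne_top_of_subset inter_subset_right hIfin)
    have h₂ := measureReal_add_le_of_disjoint inter_subset_right hγI hAγ measurableSet_Ioo hIfin
    rw [hlen (hγ.aPt_lt.trans hγ.lt_cPt), hlen (hβ.aPt_lt.trans hβ.lt_cPt)] at h₂
    constructor <;> linarith
  · have hQγm : MeasurableSet (Q ∪ Ioo (aPt g γ) (cPt g γ)) := hQm.union measurableSet_Ioo
    have h₂ := measureReal_add_le_of_disjoint inter_subset_right (union_subset hQ hγI)
      (disjoint_union_right.2 ⟨(hQA.mono_right inter_subset_left).symm, hAγ⟩) hQγm hIfin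
    rw [measureReal_union hQγ measurableSet_Ioo (measure_ne_top_of_subset hQ hIfin)
      (measure_ne_top_of_subset hγI hIfin), hlen (hγ.aPt_lt.trans hγ.lt_cPt),
      hlen (hβ.aPt_lt.trans hβ.lt_cPt)] at h₂
    constructor <;> linarith

end Shuffle

section ShuffledBlocks

variable {g : ℝ → ℝ} {b : ℕ → ℝ} {s : ℕ → Bool} {i j l : ℕ}

namespace IsEnum

lemma shuffled_subset_halves (hb : IsEnum g b) (hg : IsCRT g) (hlj : l ≠ j)
    (hsub : block g (b j) ⊆ block g (b l)) :
    (s l = decide (b l < aPt g (b j)) →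
      Icc (aI' g b s j) (cI' g b s j) ⊆ Icc (bI' g b s l) (cI' g b s l)) ∧
    (s l ≠ decide (b l < aPt g (b j)) →
      Icc (aI' g b s j) (cI' g b s j) ⊆ Icc (aI' g b s l) (bI' g b s l)) := by
  have hl := hb.strictMinBlock hg l
  have hj := hb.strictMinBlock hg j
  have hlt := hb.apply_lt_of_block_subset hg hlj hsub
  obtain ⟨ha, hc⟩ := hl.aPt_lt_aPt_and_cPt_lt_cPt hj hlt hsub
  have hI : Ioo (aPt g (b l)) (cPt g (b l)) ⊆ Icc 0 1 :=
    Ioo_subset_Icc_self.trans hl.block_subset_Icc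
  simp only [aI', bI', cI', aI, cI]
  rcases (not_and_or.1 (hj.not_mem_block hlt)).imp not_le.1 not_le.1 with hr | hleft
  · -- `b j` is right of `b l`: the left half of its block precedes `aPt g (b j)` iff `s l`
    have htri : ∀ u ∈ Ioo (aPt g (b l)) (b l), Tri g b s u (aPt g (b j)) ↔ s l = true :=
      fun u hu => (hb.tri_iff_of_mem_block hg hu ⟨hr, hj.aPt_lt.trans (hj.lt_cPt.trans hc)⟩).1
    obtain ⟨hA, hB⟩ := hl.phi_aPt_bounds (b := b) (s := s) hj hg hsub
      (Ioo_subset_Ioo_right hl.lt_cPt.le) measurableSet_Ioo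
      (disjoint_left.2 fun u hu hu' => (hu.2.trans hr).not_gt hu'.1)
    rw [Real.volume_real_Ioo_of_le hl.aPt_lt.le] at hA hB
    rw [decide_eq_true hr]
    refine ⟨fun hs => ?_, fun hs => ?_⟩
    · obtain ⟨h₁, h₂⟩ := hA fun u hu =>
        ⟨hI (Ioo_subset_Ioo_right hl.lt_cPt.le hu), (htri u hu).2 hs⟩
      rw [if_pos hs]
      exact Icc_subset_Icc (by linarith) (by linarith)
    · obtain ⟨h₁, h₂⟩ := hB (disjoint_left.2 fun u hu hu' => hs ((htri u hu).1 hu'.2))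
      rw [if_neg hs]
      exact Icc_subset_Icc (by linarith) (by linarith)
  · -- `b j` is left of `b l`: the right half of its block precedes `aPt g (b j)` iff `¬ s l`
    have htri : ∀ u ∈ Ioo (b l) (cPt g (b l)), Tri g b s u (aPt g (b j)) ↔ s l = false :=
      fun u hu => (hb.tri_iff_of_mem_block hg ⟨ha, (hj.aPt_lt.trans hj.lt_cPt).trans hleft⟩ hu).2
    obtain ⟨hA, hB⟩ := hl.phi_aPt_bounds (b := b) (s := s) hj hg hsub
      (Ioo_subset_Ioo_left hl.aPt_lt.le) measurableSet_Ioo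
      (disjoint_left.2 fun u hu hu' => (hu'.2.trans hleft).not_gt hu.1)
    rw [Real.volume_real_Ioo_of_le hl.lt_cPt.le] at hA hB
    rw [decide_eq_false (not_lt.2 ((hj.aPt_lt.trans hj.lt_cPt).trans hleft).le)]
    refine ⟨fun hs => ?_, fun hs => ?_⟩
    · obtain ⟨h₁, h₂⟩ := hA fun u hu =>
        ⟨hI (Ioo_subset_Ioo_left hl.aPt_lt.le hu), (htri u hu).2 hs⟩
      rw [if_neg (by simp [hs])]
      exact Icc_subset_Icc (by linarith) (by linarith)
    · obtain ⟨h₁, h₂⟩ := hB (disjoint_left.2 fun u hu hu' => hs ((htri u hu).1 hu'.2))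
      rw [if_pos (by simpa using hs)]
      exact Icc_subset_Icc (by linarith) (by linarith)

lemma aI'_lt_cI' (hb : IsEnum g b) (hg : IsCRT g) (l : ℕ) : aI' g b s l < cI' g b s l := by
  have hl := hb.strictMinBlock hg l
  simp only [cI', aI, cI]
  linarith [hl.aPt_lt, hl.lt_cPt]

lemma bI'_mem_Icc (hb : IsEnum g b) (hg : IsCRT g) (l : ℕ) :
    bI' g b s l ∈ Icc (aI' g b s l) (cI' g b s l) := by
  have hl := hb.strictMinBlock hg l
  simp only [bI', cI', aI, cI]
  split_ifs <;> constructor <;> linarith [hl.aPt_lt, hl.lt_cPt]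

lemma shuffled_subset (hb : IsEnum g b) (hg : IsCRT g) (hsub : block g (b j) ⊆ block g (b l)) :
    Icc (aI' g b s j) (cI' g b s j) ⊆ Icc (aI' g b s l) (cI' g b s l) := by
  rcases eq_or_ne l j with rfl | hlj
  · exact subset_rfl
  have hbI := hb.bI'_mem_Icc (s := s) hg l
  by_cases hs : s l = decide (b l < aPt g (b j))
  · exact ((hb.shuffled_subset_halves hg hlj hsub).1 hs).trans (Icc_subset_Icc hbI.1 le_rfl)
  · exact ((hb.shuffled_subset_halves hg hlj hsub).2 hs).trans (Icc_subset_Icc le_rfl hbI.2)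

/-- The two blocks lie on opposite sides of their common ancestor `b k`, so their images lie in
opposite halves of the shuffled block of `b k`. -/
lemma shuffled_apart (hb : IsEnum g b) (hg : IsCRT g)
    (hgap : cPt g (b i) < aPt g (b j)) :
    cI' g b s i ≤ aI' g b s j ∨ cI' g b s j ≤ aI' g b s i := by
  obtain ⟨k, hk, hik, hjk⟩ := hb.exists_common_ancestor hg hgap
  have hi := hb.strictMinBlock hg i
  have hj := hb.strictMinBlock hg j
  have hki : k ≠ i := by rintro rfl; exact hk.1.not_gt hi.lt_cPt
  have hkj : k ≠ j := by rintro rfl; exact hk.2.not_gt hj.aPt_lt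
  have hdi : decide (b k < aPt g (b i)) = false :=
    decide_eq_false (not_lt.2 ((hi.aPt_lt.trans hi.lt_cPt).trans hk.1).le)
  have hdj : decide (b k < aPt g (b j)) = true := decide_eq_true hk.2
  have hIi := hb.shuffled_subset_halves (s := s) hg hki hik
  have hIj := hb.shuffled_subset_halves (s := s) hg hkj hjk
  rw [hdi] at hIi
  rw [hdj] at hIj
  have ends : ∀ {x y u v : ℝ}, x ≤ y → Icc x y ⊆ Icc u v → u ≤ x ∧ y ≤ v :=
    fun hxy h => (Icc_subset_Icc_iff hxy).1 h
  cases hs : s k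
  · exact Or.inr ((ends (hb.aI'_lt_cI' hg j).le (hIj.2 (by simp [hs]))).2.trans
      (ends (hb.aI'_lt_cI' hg i).le (hIi.1 hs)).1)
  · exact Or.inl ((ends (hb.aI'_lt_cI' hg i).le (hIi.2 (by simp [hs]))).2.trans
      (ends (hb.aI'_lt_cI' hg j).le (hIj.1 hs)).1)

lemma block_subset_of_shuffled_subset (hb : IsEnum g b) (hg : IsCRT g) (hij : i ≠ j)
    (h : Icc (aI' g b s j) (cI' g b s j) ⊆ Icc (aI' g b s i) (cI' g b s i)) :
    block g (b j) ⊆ block g (b i) := by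
  have hlen := hb.aI'_lt_cI' (s := s) hg
  obtain ⟨h₁, h₂⟩ := (Icc_subset_Icc_iff (hlen j).le).1 h
  rcases hb.block_trichotomy hg hij with hji | hij' | hgap | hgap
  · exact hji
  · obtain ⟨ha, hc⟩ := (hb.strictMinBlock hg j).aPt_lt_aPt_and_cPt_lt_cPt
      (hb.strictMinBlock hg i) (hb.apply_lt_of_block_subset hg hij.symm hij') hij'
    obtain ⟨h₃, h₄⟩ := (Icc_subset_Icc_iff (hlen i).le).1 (hb.shuffled_subset (s := s) hg hij')
    simp only [aI', cI', aI, cI] at h₁ h₂ h₃ h₄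
    linarith
  · rcases hb.shuffled_apart (s := s) hg hgap with h' | h' <;> linarith [hlen i, hlen j]
  · rcases hb.shuffled_apart (s := s) hg hgap with h' | h' <;> linarith [hlen i, hlen j]

end IsEnum

end ShuffledBlocks

section Window

variable {g : ℝ → ℝ} {b : ℕ → ℝ} {i j : ℕ} {q₁ q₂ : ℝ}

lemma Icc_subset_closure_of_forall_rat {H : Set ℝ} {x y : ℝ} (hxy : x < y)
    (hH : ∀ q₁ q₂ : ℚ, x < q₁ → (q₁ : ℝ) < q₂ → (q₂ : ℝ) < y → ∃ h ∈ H, h ∈ Ioo (q₁ : ℝ) q₂) :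
    Icc x y ⊆ closure H := by
  intro z hz
  refine Metric.mem_closure_iff.2 fun ε hε => ?_
  obtain ⟨q₁, hq₁, hq₁'⟩ := exists_rat_btwn (max_lt (lt_min hxy (by linarith [hz.1]))
    (lt_min (by linarith [hz.2]) (by linarith)) : max x (z - ε) < min y (z + ε))
  obtain ⟨q₂, hq₂, hq₂'⟩ := exists_rat_btwn hq₁'
  obtain ⟨h, hH, hh⟩ := hH q₁ q₂ ((le_max_left _ _).trans_lt hq₁) hq₂
    (hq₂'.trans_le (min_le_left _ _))
  refine ⟨h, hH, ?_⟩
  rw [Real.dist_eq, abs_lt]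
  constructor <;> linarith [le_max_right x (z - ε), min_le_right y (z + ε), hh.1, hh.2]

def ancestorsBetween (g : ℝ → ℝ) (b : ℕ → ℝ) (i j : ℕ) (q₁ q₂ : ℝ) : Set ℕ :=
  {l | g (b l) ∈ Ioo q₁ q₂ ∧ block g (b l) ⊆ block g (b i) ∧ block g (b j) ⊆ block g (b l)}

namespace IsEnum

lemma exists_mem_ancestorsBetween (hb : IsEnum g b) (hg : IsCRT g)
    (hsub : block g (b j) ⊆ block g (b i))
    (hq₁ : g (b i) < q₁) (hq : q₁ < q₂) (hq₂ : q₂ < g (b j)) :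
    (ancestorsBetween g b i j q₁ q₂).Nonempty := by
  have hi := hb.strictMinBlock hg i
  have hj := hb.strictMinBlock hg j
  have haj : aPt g (b i) ≤ b j := (hsub hj.mem_block).1
  have hI : Icc (aPt g (b i)) (b j) ⊆ Icc 0 1 :=
    Icc_subset_Icc hi.aPt_pos.le (hj.lt_cPt.trans hj.cPt_lt_one).le
  -- `u` is the last time before `b j` at which `g ≤ q₁`
  set K := {t ∈ Icc (aPt g (b i)) (b j) | g t ≤ q₁}
  have hKc : IsClosed K := (hg.cont.mono hI).preimage_isClosed_of_isClosed isClosed_Icc isClosed_Iic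
  have hKbdd : BddAbove K := ⟨b j, fun t ht => ht.1.2⟩
  have haK : aPt g (b i) ∈ K := ⟨⟨le_rfl, haj⟩, hi.apply_aPt ▸ hq₁.le⟩
  set u := sSup K
  have huK : u ∈ K := hKc.csSup_mem ⟨_, haK⟩ hKbdd
  have hau : aPt g (b i) ≤ u := le_csSup hKbdd haK
  have huj : u < b j := huK.1.2.lt_of_ne fun h => (h ▸ huK.2).not_gt (hq.trans hq₂)
  have habove : ∀ t ∈ Ioc u (b j), q₁ < g t := fun t ht => lt_of_not_ge fun h =>
    ht.1.not_ge (le_csSup hKbdd ⟨⟨hau.trans ht.1.le, ht.2⟩, h⟩)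
  obtain ⟨δ, hδ, hδq⟩ : ∃ δ > 0, ∀ t ∈ Icc (0 : ℝ) 1, dist t u < δ → g t < q₂ := by
    obtain ⟨δ, hδ, h⟩ := Metric.continuousOn_iff.1 hg.cont u (hI huK.1) (q₂ - q₁) (by linarith)
    refine ⟨δ, hδ, fun t ht hd => ?_⟩
    have := h t ht hd
    rw [Real.dist_eq, abs_lt] at this
    linarith [huK.2]
  -- a local minimum `β'` soon after `u` has height in `(q₁, q₂)`
  obtain ⟨β', hβ', hβ'min⟩ := hg.exists_isInnerLocalMin_mem_Ioo
    (lt_min (by linarith : u < u + δ) huj) (hI huK.1).1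
    ((min_le_right _ _).trans (hI ⟨haj, le_rfl⟩).2)
  have hβ'j : β' < b j := hβ'.2.trans_le (min_le_right _ _)
  have hβ'I : Icc β' (b j) ⊆ Icc 0 1 :=
    (Icc_subset_Icc_left (hau.trans hβ'.1.le)).trans hI
  have hβ'q₂ : g β' < q₂ := hδq β' (hβ'I ⟨le_rfl, hβ'j.le⟩) (by
    rw [Real.dist_eq, abs_lt]
    constructor <;> linarith [hβ'.1, hβ'.2.trans_le (min_le_left _ _)])
  -- the minimum of `g` on `[β', b j]` is the ancestor sought
  obtain ⟨β, hβ, hmin⟩ := isCompact_Icc.exists_isMinOn (nonempty_Icc.2 hβ'j.le)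
    (hg.cont.mono hβ'I)
  have hβq₂ : g β < q₂ := (hmin ⟨le_rfl, hβ'j.le⟩).trans_lt hβ'q₂
  have hβq₁ : q₁ < g β := habove β ⟨hβ'.1.trans_le hβ.1, hβ.2⟩
  have hβj : β < b j := hβ.2.lt_of_ne fun h => (h ▸ hβq₂).not_gt hq₂
  have hinner : IsInnerLocalMin g β := by
    rcases hβ.1.eq_or_lt with h | h
    · exact h ▸ hβ'min
    · exact isInnerLocalMin_of_isMinOn ⟨h, hβj⟩ (hβ'I ⟨le_rfl, hβ'j.le⟩).1
        (hβ'I ⟨hβ'j.le, le_rfl⟩).2 hmin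
  obtain ⟨l, rfl⟩ := (hb.2 β).1 (hg.isStrictLocalMin_of_isInnerLocalMin hinner)
  have hl := hb.strictMinBlock hg l
  have hjl : b j < cPt g (b l) := hl.lt_cPt_of_forall fun t ht => by
    rcases ht.2.eq_or_lt with rfl | htj
    · exact hβq₂.trans hq₂
    · exact (hmin ⟨hβ.1.trans ht.1.le, ht.2⟩).lt_of_ne fun h => ht.1.ne' <| hg.distinct t (b l)
        (isInnerLocalMin_of_isMinOn ⟨hβ.1.trans_lt ht.1, htj⟩ (hβ'I ⟨le_rfl, hβ'j.le⟩).1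
          (hβ'I ⟨hβ'j.le, le_rfl⟩).2 fun x hx => h ▸ hmin hx) hinner h.symm
  exact ⟨l, ⟨hβq₁, hβq₂⟩,
    hi.block_subset_of_mem hl (hq₁.trans hβq₁)
      ⟨hau.trans_lt (hβ'.1.trans_le hβ.1), hβj.trans_le (hsub hj.mem_block).2⟩,
    hl.block_subset_of_mem hj (hβq₂.trans hq₂) ⟨hl.aPt_lt.trans hβj, hjl⟩⟩

lemma ancestorsBetween_infinite (hb : IsEnum g b) (hg : IsCRT g)
    (hsub : block g (b j) ⊆ block g (b i))
    (hq₁ : g (b i) < q₁) (hq : q₁ < q₂) (hq₂ : q₂ < g (b j)) :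
    (ancestorsBetween g b i j q₁ q₂).Infinite := by
  intro hfin
  set H := (fun l => g (b l)) '' ancestorsBetween g b i j q₁ q₂
  have hH : H.Finite := hfin.image _
  have hdense : Icc q₁ q₂ ⊆ closure H :=
    Icc_subset_closure_of_forall_rat hq fun r₁ r₂ h₁ h₁₂ h₂ => by
      obtain ⟨l, hl, hli, hjl⟩ :=
        hb.exists_mem_ancestorsBetween hg hsub (hq₁.trans h₁) h₁₂ (h₂.trans hq₂)
      exact ⟨_, ⟨l, ⟨⟨h₁.trans hl.1, hl.2.trans h₂⟩, hli, hjl⟩, rfl⟩, hl⟩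
  rw [hH.isClosed.closure_eq] at hdense
  exact Icc_infinite hq (hH.subset hdense)

end IsEnum

end Window

section Signs

open ProbabilityTheory

variable {Ω : Type*} [MeasurableSpace Ω] {P : Measure Ω}

lemma measure_forall_mem_preimage_eq_zero {ι β : Type*} [MeasurableSpace β] {X : ι → Ω → β}
    (hindep : iIndepFun X P) {B : ι → Set β} (hB : ∀ i, MeasurableSet (B i)) {r : ENNReal}
    (hr : r < 1) (hle : ∀ i, P (X i ⁻¹' B i) ≤ r) {L : Set ι} (hL : L.Infinite) :
    P {ω | ∀ i ∈ L, X i ω ∈ B i} = 0 := by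
  refine le_antisymm (ge_of_tendsto' (ENNReal.tendsto_pow_atTop_nhds_zero_of_lt_one hr)
    fun n => ?_) zero_le
  obtain ⟨F, hFL, hF, hFn⟩ := hL.exists_subset_ncard_eq n
  calc P {ω | ∀ i ∈ L, X i ω ∈ B i}
      ≤ P (⋂ i ∈ hF.toFinset, X i ⁻¹' B i) :=
        measure_mono fun ω hω => mem_iInter₂.2 fun i hi => hω i (hFL (hF.mem_toFinset.1 hi))
    _ = ∏ i ∈ hF.toFinset, P (X i ⁻¹' B i) :=
        hindep.measure_inter_preimage_eq_mul _ fun i _ => hB i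
    _ ≤ ∏ _i ∈ hF.toFinset, r := Finset.prod_le_prod' fun i _ => hle i
    _ = r ^ n := by rw [Finset.prod_const, ← hFn, ncard_eq_toFinset_card _ hF]

lemma ae_exists_mem_eq [IsProbabilityMeasure P] {S : Ω → ℕ → Bool}
    (hmeas : ∀ i, Measurable fun ω => S ω i) (hindep : iIndepFun (fun i ω => S ω i) P)
    {p : ℝ} (hp : p ∈ Ioo (0 : ℝ) 1) (hbias : ∀ i, P {ω | S ω i = true} = ENNReal.ofReal p)
    (L : Set ℕ) (d : ℕ → Bool) : ∀ᵐ ω ∂P, L.Infinite → ∃ l ∈ L, S ω l = d l := by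
  by_cases hL : L.Infinite
  swap
  · exact ae_of_all _ fun _ h => absurd h hL
  have hr : max (ENNReal.ofReal p) (1 - ENNReal.ofReal p) < 1 :=
    max_lt (ENNReal.ofReal_lt_one.2 hp.2)
      (ENNReal.sub_lt_self ENNReal.one_ne_top one_ne_zero (ENNReal.ofReal_pos.2 hp.1).ne')
  have hle : ∀ l, P ((fun ω => S ω l) ⁻¹' {!d l}) ≤
      max (ENNReal.ofReal p) (1 - ENNReal.ofReal p) := by
    intro l
    cases d l
    · exact (hbias l).le.trans (le_max_left _ _)
    · have hc : (fun ω => S ω l) ⁻¹' {!true} = {ω | S ω l = true}ᶜ := by ext; simp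
      rw [hc, measure_compl (s := {ω | S ω l = true}) (hmeas l (measurableSet_singleton true))
        (measure_ne_top P _), measure_univ, hbias l]
      exact le_max_right _ _
  have h0 := measure_forall_mem_preimage_eq_zero hindep (fun l => measurableSet_singleton (!d l))
    hr hle hL
  rw [ae_iff]
  exact measure_mono_null (fun ω (hω : ¬ _) l hl =>
    Bool.eq_not_of_ne fun h => hω fun _ => ⟨l, hl, h⟩) h0

end Signs

lemma IsEnum.propA {g : ℝ → ℝ} {b : ℕ → ℝ} {s : ℕ → Bool} (hb : IsEnum g b) (hg : IsCRT g)
    (hs : ∀ i j (q₁ q₂ : ℚ) (c : Bool), (ancestorsBetween g b i j q₁ q₂).Infinite →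
      ∃ l ∈ ancestorsBetween g b i j q₁ q₂, s l = xor (decide (b l < aPt g (b j))) c) :
    PropA g b s := by
  intro i j hij hsub
  have hji := hb.block_subset_of_shuffled_subset hg hij hsub
  have hlt := hb.apply_lt_of_block_subset hg hij hji
  have hwindow : ∀ (c : Bool) (q₁ q₂ : ℚ), g (b i) < q₁ → (q₁ : ℝ) < q₂ → (q₂ : ℝ) < g (b j) →
      ∃ l, (g (b l) ∈ Ioo (q₁ : ℝ) q₂ ∧ block g (b l) ⊆ block g (b i) ∧ l ≠ j ∧
        block g (b j) ⊆ block g (b l)) ∧ s l = xor (decide (b l < aPt g (b j))) c := by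
    intro c q₁ q₂ h₁ h h₂
    obtain ⟨l, ⟨hl, hli, hjl⟩, hsl⟩ := hs i j q₁ q₂ c (hb.ancestorsBetween_infinite hg hji h₁ h h₂)
    exact ⟨l, ⟨hl, hli, by rintro rfl; exact (hl.2.trans h₂).false, hjl⟩, hsl⟩
  refine ⟨Icc_subset_closure_of_forall_rat hlt fun q₁ q₂ h₁ h h₂ => ?_,
    Icc_subset_closure_of_forall_rat hlt fun q₁ q₂ h₁ h h₂ => ?_⟩
  · obtain ⟨l, ⟨hl, hli, hlj, hjl⟩, hsl⟩ := hwindow false q₁ q₂ h₁ h h₂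
    exact ⟨g (b l), ⟨l, rfl, hb.shuffled_subset hg hli,
      (hb.shuffled_subset_halves hg hlj hjl).1 (by simpa using hsl)⟩, hl⟩
  · obtain ⟨l, ⟨hl, hli, hlj, hjl⟩, hsl⟩ := hwindow true q₁ q₂ h₁ h h₂
    exact ⟨g (b l), ⟨l, rfl, hb.shuffled_subset hg hli,
      (hb.shuffled_subset_halves hg hlj hjl).2 (by simp [hsl])⟩, hl⟩

open ProbabilityTheory in
/-- For a CRT excursion decorated with i.i.d. signs of bias `p ∈ (0,1)`,
property (A) holds almost surely. -/
theorem stmt12 (g : ℝ → ℝ) (hg : IsCRT g) (b : ℕ → ℝ) (hb : IsEnum g b)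
    (p : ℝ) (hp : p ∈ Set.Ioo (0:ℝ) 1)
    {Ω : Type*} [MeasurableSpace Ω] (P : Measure Ω) [IsProbabilityMeasure P]
    (S : Ω → ℕ → Bool)
    (hmeas : ∀ i, Measurable fun ω => S ω i)
    (hindep : iIndepFun (fun i ω => S ω i) P)
    (hbias : ∀ i, P {ω | S ω i = true} = ENNReal.ofReal p) :
    ∀ᵐ ω ∂P, PropA g b (S ω) := by
  filter_upwards [ae_all_iff.2 fun x : ℕ × ℕ × ℚ × ℚ × Bool =>
    ae_exists_mem_eq hmeas hindep hp hbias (ancestorsBetween g b x.1 x.2.1 x.2.2.1 x.2.2.2.1)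
      fun l => xor (decide (b l < aPt g (b x.2.1))) x.2.2.2.2] with ω hω
  exact hb.propA hg fun i j q₁ q₂ c => hω (i, j, q₁, q₂, c)
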